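/- arXiv:2111.05030 — 3 statements merged into one kernel-verified Lean document; each statement's English description precedes it below -/
import Mathlib

section
/- For every integer r ≥ 1: (i) for every j ∈ ℕ the function |Δ^(r)|^j is ℙ-integrable on X (Δ^(r) has finite moments of all orders); (ii) ∫_X Δ^(r)(x) dℙ(x) = 0; and consequently (iii) lim_{N→∞} (1/N)·Σ_{n<N} (s(n+r) − s(n)) = 0. -/
open Filter Topology MeasureTheory

noncomputable section

/-- Sum of the base-`b` digits of `n`. -/
def digitSum (b n : ℕ) : ℕ := (Nat.digits b n).sum

/-- `Δ^(r)(n) = s(n+r) - s(n)`, the variation of the base-`b` digit sum when adding `r`. -/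
def delta (b r n : ℕ) : ℤ := (digitSum b (n + r) : ℤ) - (digitSum b n : ℤ)

/-- The value `x_0 + x_1 b + ⋯ + x_k b^k` given by the first `k+1` digits of a `b`-adic
integer `x : ℕ → Fin b`. -/
def valk (b : ℕ) (x : ℕ → Fin b) (k : ℕ) : ℕ :=
  ∑ i ∈ Finset.range (k + 1), (x i : ℕ) * b ^ i

/-- `Δ_k^(r)(x) = s_k(x+r) - s_k(x)`: since carries propagate upwards, the first `k+1`
digits of `x + r` are the base-`b` digits of `(x_0 + x_1 b + ⋯ + x_k b^k + r) % b^(k+1)`. -/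
def deltak (b r k : ℕ) (x : ℕ → Fin b) : ℤ :=
  (digitSum b ((valk b x k + r) % b ^ (k + 1)) : ℤ) - (digitSum b (valk b x k) : ℤ)

/-- `Δ^(r)(x) = lim_k Δ_k^(r)(x)`; the sequence is eventually constant for `ℙ`-a.e. `x`. -/
def deltaX (b r : ℕ) (x : ℕ → Fin b) : ℤ :=
  limUnder atTop fun k => deltak b r k x

/-!
Carries propagate upwards, so once `x` has a digit at most `b - 2` at a position `k` with
`r ≤ b ^ k`, the carry created by adding `r` dies there and `Δ_k^(r)(x)` is constant from `k` on.
The first such position is `r + L(x)`, where `L(x)` is the length of the run of digits `b - 1`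
of `x` starting at position `r`. This run has geometric tails, `ℙ(L ≥ t) ≤ b^(-t)`, and
`|Δ^(r)| ≤ (b - 1)(L + r + 1)`, which gives all moments. Each `Δ_k^(r)` depends only on the
first `k + 1` digits, which are uniformly distributed on `ℤ/b^(k+1)`, where `n ↦ n + r` is a
bijection; hence `∫ Δ_k^(r) = 0`, and dominated convergence gives `∫ Δ^(r) = 0`. Finally the
Cesàro sum telescopes to `∑_{i<r} (s(N + i) - s(i))`, and `s(n) = O(log n)`.
-/

open Asymptotics

lemma isLittleO_const_natCast (c : ℝ) : (fun _ : ℕ => c) =o[atTop] (fun n : ℕ => (n : ℝ)) :=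
  (isLittleO_const_id_atTop c).comp_tendsto tendsto_natCast_atTop_atTop

section DigitSum

variable {b : ℕ}

lemma digitSum_le_of_lt_pow (hb : 1 < b) {n K : ℕ} (h : n < b ^ K) :
    digitSum b n ≤ (b - 1) * K := by
  calc digitSum b n ≤ (Nat.digits b n).length • (b - 1) :=
        List.sum_le_card_nsmul _ _ fun d hd => Nat.le_sub_one_of_lt (Nat.digits_lt_base hb hd)
    _ ≤ (b - 1) * K := by
        rw [smul_eq_mul, mul_comm]
        exact Nat.mul_le_mul_left _ ((Nat.digits_length_le_iff hb n).2 h)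

lemma digitSum_of_lt {d : ℕ} (hd : d < b) : digitSum b d = d := by
  rcases eq_or_ne d 0 with rfl | h0
  · simp [digitSum]
  · simp [digitSum, Nat.digits_of_lt b d h0 hd]

lemma digitSum_add_pow_mul (hb : 1 < b) {u K : ℕ} (hu : u < b ^ K) (m : ℕ) :
    digitSum b (u + b ^ K * m) = digitSum b u + digitSum b m := by
  rcases eq_or_ne m 0 with rfl | hm
  · simp [digitSum]
  have h := Nat.digits_append_zeroes_append_digits (k := K - (Nat.digits b u).length) (n := u)
    hb (Nat.pos_of_ne_zero hm)
  rw [Nat.add_sub_cancel' ((Nat.digits_length_le_iff hb u).2 hu)] at h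
  simp [digitSum, ← h]

lemma digitSum_isLittleO (hb : 1 < b) :
    (fun n => (digitSum b n : ℝ)) =o[atTop] (fun n => (n : ℝ)) := by
  have hlog : (fun n : ℕ => Real.logb b n + 1) =o[atTop] (fun n => (n : ℝ)) := by
    refine IsLittleO.add ?_ (isLittleO_const_natCast 1)
    simp only [Real.logb, div_eq_mul_inv]
    exact ((Real.isLittleO_log_id_atTop.comp_tendsto tendsto_natCast_atTop_atTop).mul_isBigO
      (isBigO_const_const _ one_ne_zero _)).congr_right fun n => mul_one _
  refine IsBigO.trans_isLittleO
    (IsBigO.of_bound ((b - 1 : ℕ) : ℝ) (Eventually.of_forall fun n => ?_)) hlog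
  have hs := digitSum_le_of_lt_pow hb (Nat.lt_pow_succ_log_self hb n)
  have hl := Real.natLog_le_logb n b
  rw [Real.norm_natCast]
  calc (digitSum b n : ℝ) ≤ ((b - 1 : ℕ) : ℝ) * (Nat.log b n + 1) := by exact_mod_cast hs
    _ ≤ ((b - 1 : ℕ) : ℝ) * (Real.logb b n + 1) := by gcongr
    _ ≤ ((b - 1 : ℕ) : ℝ) * ‖Real.logb b n + 1‖ := by gcongr; exact Real.le_norm_self _

end DigitSum

lemma sum_range_sub_comp_add {M : Type*} [AddCommGroup M] (f : ℕ → M) (N r : ℕ) :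
    ∑ n ∈ Finset.range N, (f (n + r) - f n) = ∑ i ∈ Finset.range r, (f (N + i) - f i) := by
  have h₁ := Finset.sum_range_add f r N
  have h₂ := Finset.sum_range_add f N r
  rw [add_comm N r] at h₂
  simp only [Finset.sum_sub_distrib, add_comm _ r, sub_eq_sub_iff_add_eq_add]
  rw [add_comm, ← h₁, h₂, add_comm]

lemma tendsto_cesaro_delta {b : ℕ} (hb : 1 < b) (r : ℕ) :
    Tendsto (fun N : ℕ => (N : ℝ)⁻¹ * ∑ n ∈ Finset.range N, (delta b r n : ℝ)) atTop
      (𝓝 0) := by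
  have hs := digitSum_isLittleO hb
  have hshift : ∀ i : ℕ, (fun N : ℕ => ((N + i : ℕ) : ℝ)) =O[atTop] fun N => (N : ℝ) :=
    fun i => ((isBigO_refl _ _).add (isLittleO_const_natCast i).isBigO).congr_left
      fun N => by push_cast; rfl
  have hterm : ∀ i : ℕ, (fun N : ℕ => (digitSum b (N + i) : ℝ) - digitSum b i)
      =o[atTop] (fun N => (N : ℝ)) := fun i =>
    ((hs.comp_tendsto (tendsto_add_atTop_nat i)).trans_isBigO (hshift i)).sub
      (isLittleO_const_natCast _)
  have hsum : (fun N : ℕ => ∑ i ∈ Finset.range r, ((digitSum b (N + i) : ℝ) - digitSum b i))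
      =o[atTop] (fun N => (N : ℝ)) :=
    IsLittleO.fun_sum fun i _ => hterm i
  refine hsum.tendsto_div_nhds_zero.congr fun N => ?_
  rw [div_eq_inv_mul, ← sum_range_sub_comp_add (fun n => (digitSum b n : ℝ))]
  simp [delta]

section Carries

variable {b r : ℕ} (x : ℕ → Fin b)

lemma sum_range_mul_pow_eq_finFunctionFinEquiv (K : ℕ) :
    ∑ i ∈ Finset.range K, (x i : ℕ) * b ^ i = finFunctionFinEquiv (fun i : Fin K => x i) := by
  rw [finFunctionFinEquiv_apply, Fin.sum_univ_eq_sum_range (fun i => (x i : ℕ) * b ^ i)]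

lemma sum_range_mul_pow_lt (K : ℕ) : ∑ i ∈ Finset.range K, (x i : ℕ) * b ^ i < b ^ K := by
  rw [sum_range_mul_pow_eq_finFunctionFinEquiv]
  exact Fin.is_lt _

lemma valk_lt (k : ℕ) : valk b x k < b ^ (k + 1) := sum_range_mul_pow_lt x (k + 1)

lemma valk_succ (k : ℕ) : valk b x (k + 1) = valk b x k + b ^ (k + 1) * x (k + 1) := by
  rw [valk, Finset.sum_range_succ, mul_comm]; rfl

variable {x}

lemma valk_add_lt_of_digit_lt {k : ℕ} (hr : r ≤ b ^ k) (hx : (x k : ℕ) + 1 < b) :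
    valk b x k + r < b ^ (k + 1) := by
  have hlow := sum_range_mul_pow_lt x k
  have hdigit : ((x k : ℕ) + 2) * b ^ k ≤ b * b ^ k := Nat.mul_le_mul_right _ hx
  rw [valk, Finset.sum_range_succ, pow_succ']
  nlinarith

lemma valk_succ_add_lt {k : ℕ} (h : valk b x k + r < b ^ (k + 1)) :
    valk b x (k + 1) + r < b ^ (k + 1 + 1) := by
  have hdigit : b ^ (k + 1) * ((x (k + 1) : ℕ) + 1) ≤ b ^ (k + 1) * b :=
    Nat.mul_le_mul_left _ (x (k + 1)).is_lt
  rw [valk_succ, pow_succ b (k + 1)]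
  nlinarith

lemma deltak_succ_eq (hb : 1 < b) {k : ℕ} (h : valk b x k + r < b ^ (k + 1)) :
    deltak b r (k + 1) x = deltak b r k x := by
  have hx := (x (k + 1)).is_lt
  have hv := valk_lt x k
  have hnext := valk_succ_add_lt h
  rw [deltak, deltak, Nat.mod_eq_of_lt hnext, Nat.mod_eq_of_lt h, valk_succ,
    add_right_comm (valk b x k), digitSum_add_pow_mul hb h, digitSum_add_pow_mul hb hv,
    digitSum_of_lt hx]
  push_cast
  ring

lemma valk_add_lt_of_le {k : ℕ} (h : valk b x k + r < b ^ (k + 1)) {m : ℕ} (hm : k ≤ m) :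
    valk b x m + r < b ^ (m + 1) := by
  induction m, hm using Nat.le_induction with
  | base => exact h
  | succ m _ ih => exact valk_succ_add_lt ih

lemma deltak_eq_of_le (hb : 1 < b) {k : ℕ} (h : valk b x k + r < b ^ (k + 1)) {m : ℕ}
    (hm : k ≤ m) : deltak b r m x = deltak b r k x := by
  induction m, hm using Nat.le_induction with
  | base => rfl
  | succ m hkm ih => exact (deltak_succ_eq hb (valk_add_lt_of_le h hkm)).trans ih

lemma abs_deltak_le (hb : 1 < b) (k : ℕ) :
    |(deltak b r k x : ℝ)| ≤ (b - 1) * (k + 1) := by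
  have hcast : (((b - 1) * (k + 1) : ℕ) : ℝ) = (b - 1) * (k + 1) := by
    push_cast [Nat.cast_sub hb.le]; ring
  have h₁ : (digitSum b ((valk b x k + r) % b ^ (k + 1)) : ℝ) ≤ (b - 1) * (k + 1) := by
    rw [← hcast]
    exact_mod_cast digitSum_le_of_lt_pow hb (Nat.mod_lt _ (by positivity))
  have h₂ : (digitSum b (valk b x k) : ℝ) ≤ (b - 1) * (k + 1) := by
    rw [← hcast]
    exact_mod_cast digitSum_le_of_lt_pow hb (valk_lt x k)
  rw [deltak, abs_le]
  push_cast
  constructor <;> linarith [(digitSum b (valk b x k)).cast_nonneg (α := ℝ),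
    (digitSum b ((valk b x k + r) % b ^ (k + 1))).cast_nonneg (α := ℝ)]

end Carries

lemma measurable_sInf_setOf {α : Type*} [MeasurableSpace α] {p : ℕ → α → Prop}
    (hp : ∀ n, MeasurableSet {x | p n x}) : Measurable fun x => sInf {n | p n x} := by
  refine measurable_of_Iic fun n => ?_
  have hpre : (fun x => sInf {n | p n x}) ⁻¹' Set.Iic n =
      (⋃ m ≤ n, {x | p m x}) ∪ ⋂ m, {x | p m x}ᶜ := by
    ext x
    simp only [Set.mem_preimage, Set.mem_Iic, Set.mem_union, Set.mem_iUnion, Set.mem_iInter,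
      Set.mem_ofPred_eq, Set.mem_compl_iff, exists_prop]
    rcases Set.eq_empty_or_nonempty {m | p m x} with hS | hS
    · simp_all [Set.eq_empty_iff_forall_notMem]
    · exact ⟨fun h => Or.inl ⟨_, h, Nat.sInf_mem hS⟩, fun h => h.elim
        (fun ⟨m, hm, hpm⟩ => (Nat.sInf_le hpm).trans hm) fun h => absurd hS.some_mem (h _)⟩
  rw [hpre]
  exact (MeasurableSet.biUnion (Set.to_countable _) fun m _ => hp m).union
    (MeasurableSet.iInter fun m => (hp m).compl)

lemma summable_norm_add_pow_mul_geometric (c : ℝ) (j : ℕ) {q : ℝ} (hq₀ : 0 ≤ q)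
    (hq₁ : q < 1) : Summable fun n : ℕ => ‖((n : ℝ) + c) ^ j‖ * q ^ n := by
  refine summable_of_isBigO_nat
    (summable_pow_mul_geometric_of_norm_lt_one j (by rwa [Real.norm_of_nonneg hq₀])) ?_
  refine IsBigO.mul (IsBigO.pow ?_ j).norm_left (isBigO_refl _ _)
  exact (isBigO_refl _ _).add (isLittleO_const_natCast c).isBigO

lemma integrable_comp_of_tail_le_geometric {Ω : Type*} [MeasurableSpace Ω] {μ : Measure Ω}
    {L : Ω → ℕ} (hL : Measurable L) {q : ℝ} (hq : 0 ≤ q)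
    (htail : ∀ t, μ {x | t ≤ L x} ≤ ENNReal.ofReal q ^ t) {g : ℕ → ℝ}
    (hg : Summable fun n => ‖g n‖ * q ^ n) : Integrable (fun x => g (L x)) μ := by
  refine ⟨(measurable_from_nat.comp hL).aestronglyMeasurable, ?_⟩
  rw [hasFiniteIntegral_iff_enorm]
  calc ∫⁻ x, ‖g (L x)‖ₑ ∂μ = ∑' n, ‖g n‖ₑ * μ (L ⁻¹' {n}) := by
        rw [← lintegral_map (f := fun n => ‖g n‖ₑ) measurable_from_nat hL,
          lintegral_countable']
        simp_rw [Measure.map_apply hL (measurableSet_singleton _)]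
    _ ≤ ∑' n, ENNReal.ofReal (‖g n‖ * q ^ n) := by
        gcongr with n
        rw [ENNReal.ofReal_mul (norm_nonneg _), ofReal_norm, ENNReal.ofReal_pow hq]
        gcongr
        exact (measure_mono fun x (hx : L x = n) => hx.symm.le).trans (htail n)
    _ = ENNReal.ofReal (∑' n, ‖g n‖ * q ^ n) :=
        (ENNReal.ofReal_tsum_of_nonneg (fun n => by positivity) hg).symm
    _ < ⊤ := ENNReal.ofReal_lt_top

lemma Fin.sum_comp_add_mod {M : Type*} [AddCommMonoid M] {B : ℕ} [NeZero B] (f : ℕ → M)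
    (r : ℕ) : ∑ v : Fin B, f (((v : ℕ) + r) % B) = ∑ v : Fin B, f v := by
  have hval (v : Fin B) : ((v : ℕ) + r) % B = ((v + Fin.ofNat B r : Fin B) : ℕ) := by
    rw [Fin.val_add, Fin.val_ofNat, Nat.add_mod_mod]
  simp_rw [hval]
  exact Equiv.sum_comp (Equiv.addRight (Fin.ofNat B r)) fun v => f v

def IsUniformOnCylinders {b : ℕ} (P : Measure (ℕ → Fin b)) : Prop :=
  ∀ (k : ℕ) (a : ℕ → Fin b), P {x | ∀ i < k, x i = a i} = (1 / (b : ENNReal)) ^ k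

section UniformDigits

variable {b : ℕ} {P : Measure (ℕ → Fin b)}

lemma IsUniformOnCylinders.isProbabilityMeasure (hb : 0 < b) (hP : IsUniformOnCylinders P) :
    IsProbabilityMeasure P :=
  ⟨by simpa using hP 0 fun _ => ⟨0, hb⟩⟩

lemma IsUniformOnCylinders.measure_prefix_eq (hb : 0 < b) (hP : IsUniformOnCylinders P) (K : ℕ)
    (a : Fin K → Fin b) : P {x | (fun i : Fin K => x i) = a} = (b : ENNReal)⁻¹ ^ K := by
  convert hP K fun i => if h : i < K then a ⟨i, h⟩ else ⟨0, hb⟩ using 2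
  · ext x
    simp only [Set.mem_ofPred_eq, funext_iff, Fin.forall_iff]
    exact forall₂_congr fun i h => by rw [dif_pos h]
  · rw [one_div]

lemma IsUniformOnCylinders.integral_comp_prefix (hb : 0 < b) (hP : IsUniformOnCylinders P)
    (K : ℕ) (g : (Fin K → Fin b) → ℝ) :
    ∫ x, g (fun i => x i) ∂P = ((b : ℝ) ^ K)⁻¹ * ∑ a, g a := by
  have := hP.isProbabilityMeasure hb
  have hπ : Measurable fun (x : ℕ → Fin b) (i : Fin K) => x i :=
    measurable_pi_lambda _ fun i => measurable_pi_apply _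
  rw [← integral_map hπ.aemeasurable (measurable_of_finite g).aestronglyMeasurable,
    integral_fintype (.of_finite), Finset.mul_sum]
  refine Finset.sum_congr rfl fun a _ => ?_
  rw [measureReal_def, Measure.map_apply hπ (measurableSet_singleton a)]
  simp only [Set.preimage, Set.mem_singleton_iff]
  simp [hP.measure_prefix_eq hb]

lemma IsUniformOnCylinders.measure_digits_eq_last_le (hb : 0 < b) (hP : IsUniformOnCylinders P)
    (m t : ℕ) : P {x | ∀ s < t, ¬ (x (m + s) : ℕ) + 1 < b} ≤ (b : ENNReal)⁻¹ ^ t := by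
  let last : Fin b := ⟨b - 1, by omega⟩
  let S (a : Fin m → Fin b) : Set (ℕ → Fin b) :=
    {x | (fun i : Fin (m + t) => x i) = Fin.append a fun _ => last}
  have hcover : {x : ℕ → Fin b | ∀ s < t, ¬ (x (m + s) : ℕ) + 1 < b} ⊆ ⋃ a, S a := by
    intro x hx
    refine Set.mem_iUnion.2 ⟨fun i => x i, funext fun i => ?_⟩
    refine Fin.addCases (fun i => ?_) (fun s => ?_) i
    · simp
    · have := hx s s.is_lt
      have := (x (m + s)).is_lt
      simp only [Fin.append_right, Fin.val_natAdd]
      ext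
      simp only [last]
      omega
  have hb₀ : (b : ENNReal) ≠ 0 := by exact_mod_cast hb.ne'
  calc _ ≤ ∑' a, P (S a) := (measure_mono hcover).trans (measure_iUnion_le _)
    _ = (b : ENNReal) ^ m * (b : ENNReal)⁻¹ ^ (m + t) := by
        simp [S, hP.measure_prefix_eq hb]
    _ = (b : ENNReal)⁻¹ ^ t := by
        rw [pow_add, ← mul_assoc, ← mul_pow,
          ENNReal.mul_inv_cancel hb₀ (ENNReal.natCast_ne_top b), one_pow, one_mul]

end UniformDigits

/-- The carry created by adding `r` travels through this run of digits `b - 1`. Its value is junk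
(`sInf ∅ = 0`) on the null event that the run never ends. -/
def topDigitRun (b r : ℕ) (x : ℕ → Fin b) : ℕ := sInf {t | (x (r + t) : ℕ) + 1 < b}

section TopDigitRun

variable {b r : ℕ} {x : ℕ → Fin b}

lemma deltak_eq_of_topDigitRun_le (hb : 1 < b) (hx : {t | (x (r + t) : ℕ) + 1 < b}.Nonempty)
    {k : ℕ} (hk : r + topDigitRun b r x ≤ k) :
    deltak b r k x = deltak b r (r + topDigitRun b r x) x := by
  have hr : r ≤ b ^ (r + topDigitRun b r x) :=
    (Nat.lt_pow_self hb).le.trans (Nat.pow_le_pow_right (by omega) (Nat.le_add_right _ _))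
  exact deltak_eq_of_le hb (valk_add_lt_of_digit_lt hr (Nat.sInf_mem hx)) hk

lemma tendsto_deltak (hb : 1 < b) (hx : {t | (x (r + t) : ℕ) + 1 < b}.Nonempty) :
    Tendsto (fun k => (deltak b r k x : ℝ)) atTop (𝓝 (deltaX b r x)) := by
  have hconst := fun k => deltak_eq_of_topDigitRun_le (k := k) hb hx
  rw [deltaX, (tendsto_atTop_of_eventually_const hconst).limUnder_eq]
  exact tendsto_atTop_of_eventually_const fun k hk => by rw [hconst k hk]

lemma abs_deltak_le_topDigitRun (hb : 1 < b) (hx : {t | (x (r + t) : ℕ) + 1 < b}.Nonempty)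
    (k : ℕ) : |(deltak b r k x : ℝ)| ≤ (b - 1) * (topDigitRun b r x + (r + 1)) := by
  set T := r + topDigitRun b r x
  have hmin : deltak b r k x = deltak b r (min k T) x := by
    rcases le_total k T with h | h
    · rw [min_eq_left h]
    · rw [min_eq_right h, deltak_eq_of_topDigitRun_le hb hx h]
  have hT : ((min k T : ℕ) : ℝ) + 1 ≤ topDigitRun b r x + (r + 1) := by
    have : ((min k T : ℕ) : ℝ) ≤ T := by exact_mod_cast min_le_right k T
    push_cast [T] at this ⊢
    linarith
  rw [hmin]
  have hb₁ : (0 : ℝ) ≤ b - 1 := sub_nonneg.2 (by exact_mod_cast hb.le)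
  exact (abs_deltak_le hb _).trans (mul_le_mul_of_nonneg_left hT hb₁)

lemma measurable_topDigitRun (r : ℕ) : Measurable (topDigitRun b r) :=
  measurable_sInf_setOf fun t =>
    measurable_pi_apply (X := fun _ => Fin b) (r + t)
      (MeasurableSet.of_discrete (s := {d : Fin b | (d : ℕ) + 1 < b}))

variable {P : Measure (ℕ → Fin b)}

lemma IsUniformOnCylinders.measure_le_topDigitRun_le (hb : 0 < b) (hP : IsUniformOnCylinders P)
    (r t : ℕ) : P {x | t ≤ topDigitRun b r x} ≤ (b : ENNReal)⁻¹ ^ t :=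
  (measure_mono fun _ (hx : t ≤ _) s (hs : s < t) =>
    Nat.notMem_of_lt_sInf (hs.trans_le hx)).trans (hP.measure_digits_eq_last_le hb r t)

lemma IsUniformOnCylinders.ae_nonempty (hb : 1 < b) (hP : IsUniformOnCylinders P) (r : ℕ) :
    ∀ᵐ x ∂P, {t | (x (r + t) : ℕ) + 1 < b}.Nonempty := by
  rw [ae_iff]
  have hsub : ∀ t, {x : ℕ → Fin b | ¬ {t | (x (r + t) : ℕ) + 1 < b}.Nonempty} ⊆
      {x | ∀ s < t, ¬ (x (r + s) : ℕ) + 1 < b} := fun t x hx s _ hs => hx ⟨s, hs⟩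
  refine le_antisymm (ge_of_tendsto' (ENNReal.tendsto_pow_atTop_nhds_zero_of_lt_one
    (ENNReal.inv_lt_one.2 (Nat.one_lt_cast.2 hb))) fun t => ?_) zero_le
  exact (measure_mono (hsub t)).trans (hP.measure_digits_eq_last_le (by omega) r t)

lemma IsUniformOnCylinders.integrable_topDigitRun_add_pow (hb : 1 < b)
    (hP : IsUniformOnCylinders P) (r : ℕ) (c : ℝ) (j : ℕ) :
    Integrable (fun x => ((topDigitRun b r x : ℝ) + c) ^ j) P := by
  have hq : ENNReal.ofReal (b : ℝ)⁻¹ = (b : ENNReal)⁻¹ := by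
    rw [ENNReal.ofReal_inv_of_pos (by positivity), ENNReal.ofReal_natCast]
  refine integrable_comp_of_tail_le_geometric (measurable_topDigitRun r) (by positivity)
    (fun t => hq ▸ hP.measure_le_topDigitRun_le (by omega) r t)
    (summable_norm_add_pow_mul_geometric c j (by positivity) (inv_lt_one_of_one_lt₀ ?_))
  exact_mod_cast hb

end TopDigitRun

lemma measurable_deltak {b : ℕ} (r k : ℕ) : Measurable (deltak b r k) := by
  have hvalk : Measurable fun x : ℕ → Fin b => valk b x k :=
    Finset.measurable_sum _ fun i _ =>
      (measurable_from_top (f := fun d : Fin b => (d : ℕ) * b ^ i)).comp (measurable_pi_apply i)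
  exact (measurable_from_nat
    (f := fun v => (digitSum b ((v + r) % b ^ (k + 1)) : ℤ) - digitSum b v)).comp hvalk

lemma IsUniformOnCylinders.integral_deltak {b : ℕ} {P : Measure (ℕ → Fin b)} (hb : 0 < b)
    (hP : IsUniformOnCylinders P) (r k : ℕ) : ∫ x, (deltak b r k x : ℝ) ∂P = 0 := by
  have : NeZero b := ⟨hb.ne'⟩
  let e := finFunctionFinEquiv (m := b) (n := k + 1)
  have hprefix : ∀ x, (deltak b r k x : ℝ) =
      (digitSum b ((e (fun i => x i) + r) % b ^ (k + 1)) : ℝ) - digitSum b (e fun i => x i) :=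
    fun x => by simp [deltak, valk, e, sum_range_mul_pow_eq_finFunctionFinEquiv]
  simp_rw [hprefix]
  rw [hP.integral_comp_prefix hb (k + 1)
    (fun a => (digitSum b ((e a + r) % b ^ (k + 1)) : ℝ) - digitSum b (e a)),
    Equiv.sum_comp e (fun v => (digitSum b ((v + r) % b ^ (k + 1)) : ℝ) - digitSum b v),
    Finset.sum_sub_distrib, Fin.sum_comp_add_mod (fun n => (digitSum b n : ℝ)), sub_self,
    mul_zero]

theorem delta_moments_general (b : ℕ) (hb : 2 ≤ b)
    (P : Measure (ℕ → Fin b))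
    (hP : ∀ (k : ℕ) (a : ℕ → Fin b),
      P {x | ∀ i < k, x i = a i} = (1 / (b : ENNReal)) ^ k)
    (r : ℕ) :
    (∀ j : ℕ, Integrable (fun x => (|deltaX b r x| : ℝ) ^ j) P) ∧
    (∫ x, (deltaX b r x : ℝ) ∂P) = 0 ∧
    Tendsto (fun N : ℕ => (N : ℝ)⁻¹ * ∑ n ∈ Finset.range N, (delta b r n : ℝ)) atTop
      (𝓝 0) := by
  have hP : IsUniformOnCylinders P := hP
  have := hP.isProbabilityMeasure (by omega)
  have hrun := hP.ae_nonempty hb r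
  have hbound : ∀ᵐ x ∂P, ∀ k,
      |(deltak b r k x : ℝ)| ≤ (b - 1) * (topDigitRun b r x + (r + 1)) :=
    hrun.mono fun x hx => abs_deltak_le_topDigitRun hb hx
  have hlim : ∀ᵐ x ∂P, Tendsto (fun k => (deltak b r k x : ℝ)) atTop
      (𝓝 (deltaX b r x)) :=
    hrun.mono fun x hx => tendsto_deltak hb hx
  have hmeas : ∀ k, AEStronglyMeasurable (fun x => (deltak b r k x : ℝ)) P := fun k =>
    (measurable_from_top.comp (measurable_deltak r k)).aestronglyMeasurable
  have hmoment := fun j =>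
    (hP.integrable_topDigitRun_add_pow hb r (r + 1) j).const_mul ((b - 1 : ℝ) ^ j)
  have hX : AEStronglyMeasurable (fun x => (deltaX b r x : ℝ)) P :=
    aestronglyMeasurable_of_tendsto_ae _ hmeas hlim
  refine ⟨fun j => (hmoment j).mono' ((continuous_abs.comp_aestronglyMeasurable hX).pow j) ?_,
    tendsto_nhds_unique (tendsto_integral_of_dominated_convergence _ hmeas
      (by simpa using hmoment 1) (fun k => hbound.mono fun x hx => hx k) hlim) ?_,
    tendsto_cesaro_delta hb r⟩
  · filter_upwards [hbound, hlim] with x hxb hxl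
    rw [norm_pow, Real.norm_eq_abs, abs_abs, ← mul_pow]
    exact pow_le_pow_left₀ (abs_nonneg _) (le_of_tendsto' hxl.abs hxb) j
  · simp_rw [hP.integral_deltak (by omega)]
    exact tendsto_const_nhds

/-- For every `r ≥ 1`: (i) `|Δ^(r)|^j` is `ℙ`-integrable for every `j` (finite moments of all
orders); (ii) `∫ Δ^(r) dℙ = 0`; and (iii) `lim_N (1/N)·Σ_{n<N} (s(n+r) - s(n)) = 0`. -/
theorem delta_moments (b : ℕ) (hb : 2 ≤ b)
    (P : Measure (ℕ → Fin b))
    (hP : ∀ (k : ℕ) (a : ℕ → Fin b),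
      P {x | ∀ i < k, x i = a i} = (1 / (b : ENNReal)) ^ k)
    (r : ℕ) (hr : 1 ≤ r) :
    (∀ j : ℕ, Integrable (fun x => (|deltaX b r x| : ℝ) ^ j) P) ∧
    (∫ x, (deltaX b r x : ℝ) ∂P) = 0 ∧
    Tendsto (fun N : ℕ => (N : ℝ)⁻¹ * ∑ n ∈ Finset.range N, (delta b r n : ℝ)) atTop
      (𝓝 0) :=
  delta_moments_general b hb P hP r
end
end

section
/- Let r ≥ 1 and let f : ℤ → ℂ be any function such that f∘Δ^(r) is ℙ-integrable on X. Then lim_{N→∞} (1/N)·Σ_{n<N} f(Δ^(r)(n)) = ∫_X f(Δ^(r)(x)) dℙ(x). -/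
open Filter Topology MeasureTheory

noncomputable section

/-!
Adding `r` to `n` only changes its lowest `ℓ(n)` base-`b` digits, where `ℓ(n)` is the least `k`
with `n mod b^k + r < b^k`; hence `Δ^(r)(n)` depends only on the residue `ρ(n) = n mod b^ℓ(n)`.
The same holds for every `b`-adic integer whose carry stops, which is almost every one (the carry
passes level `K` on a set of measure at most `r b^(-K)`), and `{x | ρ(x) = s}` is a cylinder of
measure `b^(-ℓ(s))`. So the integral is `∑_s b^(-ℓ(s)) f(Δ^(r)(s))` and the average is
`∑_s d_N(s) f(Δ^(r)(s))`, where `d_N(s)` is the proportion of `n < N` with `ρ(n) = s`. Each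
`d_N(s)` tends to `b^(-ℓ(s))` and is at most `(1 + b(r+1)) b^(-ℓ(s))`, because `ρ(n) = s` forces
`b^(ℓ(s)-1) ≤ n + r`; dominated convergence for series (Tannery's theorem) concludes.
-/

open Finset Function

section DominatedAverages

lemma hasSum_integral_of_ae_partition {α ι E : Type*} [MeasurableSpace α] [Countable ι]
    [NormedAddCommGroup E] [NormedSpace ℝ E] [CompleteSpace E] {μ : Measure α}
    {C : ι → Set α} (hC : ∀ i, MeasurableSet (C i)) (hdisj : Pairwise (Disjoint on C))
    (hcover : ∀ᵐ x ∂μ, ∃ i, x ∈ C i) {F : α → E} (hF : Integrable F μ) {g : ι → E}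
    (hFg : ∀ i, ∀ x ∈ C i, F x = g i) :
    HasSum (fun i => μ.real (C i) • g i) (∫ x, F x ∂μ) := by
  have h := hasSum_integral_iUnion hC hdisj hF.integrableOn
  rw [Measure.restrict_eq_self_of_ae_mem (by simpa only [Set.mem_iUnion] using hcover)] at h
  convert h using 2 with i
  rw [setIntegral_congr_fun (hC i) (hFg i), setIntegral_const]

lemma tendsto_average_comp_of_density {β E : Type*} [DecidableEq β] [NormedAddCommGroup E]
    [NormedSpace ℝ E] [CompleteSpace E] (u : ℕ → β) (g : β → E) (w : β → ℝ) (C : ℝ)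
    (hw : ∀ s, Tendsto (fun N : ℕ => (#{n ∈ range N | u n = s} : ℝ) / N) atTop (𝓝 (w s)))
    (hdom : ∀ N s, (#{n ∈ range N | u n = s} : ℝ) ≤ C * N * w s)
    (hsum : Summable fun s => w s * ‖g s‖) :
    Tendsto (fun N : ℕ => (N : ℝ)⁻¹ • ∑ n ∈ range N, g (u n)) atTop
      (𝓝 (∑' s, w s • g s)) := by
  have hfin : ∀ N : ℕ, (N : ℝ)⁻¹ • ∑ n ∈ range N, g (u n)
      = ∑' s, ((#{n ∈ range N | u n = s} : ℝ) / N) • g s := by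
    intro N
    rw [sum_comp, smul_sum, tsum_eq_sum (s := (range N).image u)]
    · refine sum_congr rfl fun s _ => ?_
      rw [← Nat.cast_smul_eq_nsmul ℝ, smul_smul, div_eq_inv_mul]
    · intro s hs
      rw [filter_false_of_mem fun n hn hus => hs (mem_image.2 ⟨n, hn, hus⟩), card_empty,
        Nat.cast_zero, zero_div, zero_smul]
  simp_rw [hfin]
  refine tendsto_tsum_of_dominated_convergence (bound := fun s => C * (w s * ‖g s‖))
    (hsum.mul_left C) (fun s => (hw s).smul_const (g s)) ?_
  filter_upwards [eventually_gt_atTop 0] with N hN s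
  rw [norm_smul, Real.norm_of_nonneg (by positivity), ← mul_assoc]
  refine mul_le_mul_of_nonneg_right ?_ (norm_nonneg _)
  rw [div_le_iff₀ (by exact_mod_cast hN)]
  linarith [hdom N s]

end DominatedAverages

section Residues

lemma card_filter_mod_eq (N : ℕ) {p m : ℕ} (hm : m < p) :
    #{n ∈ range N | n % p = m} = N / p + if m < N % p then 1 else 0 := by
  have h := Nat.count_modEq_card N (Nat.zero_lt_of_lt hm) m
  simpa only [Nat.ModEq, Nat.mod_eq_of_lt hm, Nat.count_eq_card_filter_range] using h

lemma card_filter_mod_eq_mul_le (N : ℕ) {p m : ℕ} (hm : m < p) :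
    #{n ∈ range N | n % p = m} * p ≤ N + p := by
  have := Nat.div_mul_le_self N p
  rw [card_filter_mod_eq N hm]
  split_ifs <;> rw [add_mul] <;> omega

lemma lt_card_filter_mod_eq_mul_add (N : ℕ) {p m : ℕ} (hm : m < p) :
    N < #{n ∈ range N | n % p = m} * p + p := by
  have := Nat.div_add_mod' N p
  have := Nat.mod_lt N (Nat.zero_lt_of_lt hm)
  rw [card_filter_mod_eq N hm]
  split_ifs <;> rw [add_mul] <;> omega

lemma tendsto_card_filter_mod_eq_div {p m : ℕ} (hm : m < p) :
    Tendsto (fun N : ℕ => (#{n ∈ range N | n % p = m} : ℝ) / N) atTop (𝓝 (p : ℝ)⁻¹) := by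
  have hp : (0 : ℝ) < p := by exact_mod_cast Nat.zero_lt_of_lt hm
  have hclose : ∀ N : ℕ, 0 < N → |(#{n ∈ range N | n % p = m} : ℝ) / N - (p : ℝ)⁻¹| ≤ 1 / N := by
    intro N hN
    have hN' : (0 : ℝ) < N := by exact_mod_cast hN
    have hup : (#{n ∈ range N | n % p = m} : ℝ) * p ≤ N + p := by
      exact_mod_cast card_filter_mod_eq_mul_le N hm
    have hlow : (N : ℝ) < #{n ∈ range N | n % p = m} * p + p := by
      exact_mod_cast lt_card_filter_mod_eq_mul_add N hm
    have heq : (#{n ∈ range N | n % p = m} : ℝ) / N - (p : ℝ)⁻¹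
        = ((#{n ∈ range N | n % p = m} : ℝ) * p - N) / (N * p) := by
      field_simp
    have habs : |(#{n ∈ range N | n % p = m} : ℝ) * p - N| ≤ p :=
      abs_le.2 ⟨by linarith, by linarith⟩
    rw [heq, abs_div, abs_of_pos (mul_pos hN' hp), div_le_div_iff₀ (mul_pos hN' hp) hN']
    nlinarith [mul_le_mul_of_nonneg_right habs hN'.le]
  rw [tendsto_iff_norm_sub_tendsto_zero]
  refine squeeze_zero' (Eventually.of_forall fun _ => norm_nonneg _) ?_
    tendsto_one_div_atTop_nhds_zero_nat
  filter_upwards [eventually_gt_atTop 0] with N hN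
  exact hclose N hN

end Residues

section Carries

variable {b r : ℕ}

lemma digitSum_add_base_pow_mul (hb : 1 < b) {k t : ℕ} (ht : t < b ^ k) (q : ℕ) :
    digitSum b (t + b ^ k * q) = digitSum b t + digitSum b q := by
  rcases Nat.eq_zero_or_pos q with rfl | hq
  · simp [digitSum]
  have h := Nat.digits_append_zeroes_append_digits hb hq (n := t)
    (k := k - (Nat.digits b t).length)
  rw [Nat.add_sub_cancel' ((Nat.digits_length_le_iff hb t).2 ht)] at h
  simp [digitSum, ← h]

/-- Adding `r` to `n` produces no carry out of its lowest `k` digits in base `b`. -/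
def NoCarry (b r k n : ℕ) : Prop := n % b ^ k + r < b ^ k

lemma delta_eq_delta_mod (hb : 1 < b) {k n : ℕ} (h : NoCarry b r k n) :
    delta b r n = delta b r (n % b ^ k) := by
  have hdiv := Nat.mod_add_div n (b ^ k)
  have hplus := digitSum_add_base_pow_mul hb h (n / b ^ k)
  have hself := digitSum_add_base_pow_mul hb (Nat.mod_lt n (pow_pos (by omega) k)) (n / b ^ k)
  rw [show n % b ^ k + r + b ^ k * (n / b ^ k) = n + r by omega] at hplus
  rw [hdiv] at hself
  simp only [delta, hplus, hself]
  push_cast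
  ring

lemma noCarry_mod_pow_iff {k K n : ℕ} (hkK : k ≤ K) :
    NoCarry b r k (n % b ^ K) ↔ NoCarry b r k n := by
  rw [NoCarry, NoCarry, Nat.mod_mod_of_dvd n (pow_dvd_pow b hkK)]

lemma noCarry_iff_of_mod_eq {j k n m : ℕ} (hjk : j ≤ k) (h : n % b ^ k = m % b ^ k) :
    NoCarry b r j n ↔ NoCarry b r j m := by
  rw [← noCarry_mod_pow_iff hjk, h, noCarry_mod_pow_iff hjk]

lemma NoCarry.mono (hb : 0 < b) {k K n : ℕ} (h : NoCarry b r k n) (hkK : k ≤ K) :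
    NoCarry b r K n := by
  induction K, hkK using Nat.le_induction with
  | base => exact h
  | succ K _ ih =>
    have hdigit := Nat.mul_le_mul_left (b ^ K) (Nat.mod_lt (n / b ^ K) hb)
    unfold NoCarry at ih ⊢
    rw [Nat.mod_pow_succ, pow_succ]
    rw [Nat.mul_succ] at hdigit
    omega

lemma exists_noCarry (hb : 1 < b) (n : ℕ) : ∃ k, NoCarry b r k n := by
  have h := Nat.lt_pow_self (n := n + r) hb
  exact ⟨n + r, by rwa [NoCarry, Nat.mod_eq_of_lt (by omega)]⟩

/-- The number of lowest digits of `n` that adding `r` can change. -/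
def carryLength (b r n : ℕ) : ℕ := sInf {k | NoCarry b r k n}

def carryPrefix (b r n : ℕ) : ℕ := n % b ^ carryLength b r n

lemma noCarry_carryLength (hb : 1 < b) (n : ℕ) : NoCarry b r (carryLength b r n) n :=
  Nat.sInf_mem (exists_noCarry hb n)

lemma carryLength_le {k n : ℕ} (h : NoCarry b r k n) : carryLength b r n ≤ k :=
  Nat.sInf_le h

lemma pow_carryLength_le (hb : 0 < b) (n : ℕ) : b ^ carryLength b r n ≤ b * (n + r + 1) := by
  rcases Nat.eq_zero_or_pos (carryLength b r n) with h | h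
  · rw [h, pow_zero]
    exact Nat.one_le_iff_ne_zero.2 (by positivity)
  · obtain ⟨j, hj⟩ := Nat.exists_eq_add_one_of_ne_zero h.ne'
    have hcarry : j ∉ {k | NoCarry b r k n} :=
      Nat.notMem_of_lt_sInf (show j < carryLength b r n by omega)
    simp only [Set.mem_ofPred_eq, NoCarry, not_lt] at hcarry
    have := Nat.mod_le n (b ^ j)
    rw [hj, pow_succ, mul_comm]
    exact Nat.mul_le_mul_left b (by omega)

lemma carryLength_eq_of_mod_eq (hb : 1 < b) {n m : ℕ}
    (h : n % b ^ carryLength b r m = m % b ^ carryLength b r m) :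
    carryLength b r n = carryLength b r m := by
  have hle := carryLength_le ((noCarry_iff_of_mod_eq le_rfl h).2 (noCarry_carryLength hb m))
  exact le_antisymm hle
    (carryLength_le ((noCarry_iff_of_mod_eq hle h).1 (noCarry_carryLength hb n)))

lemma carryLength_carryPrefix (hb : 1 < b) (n : ℕ) :
    carryLength b r (carryPrefix b r n) = carryLength b r n :=
  carryLength_eq_of_mod_eq hb (Nat.mod_mod _ _)

lemma carryPrefix_lt (hb : 1 < b) (n : ℕ) :
    carryPrefix b r n < b ^ carryLength b r (carryPrefix b r n) := by
  rw [carryLength_carryPrefix hb]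
  exact Nat.mod_lt n (by positivity)

lemma carryPrefix_carryPrefix (hb : 1 < b) (n : ℕ) :
    carryPrefix b r (carryPrefix b r n) = carryPrefix b r n :=
  Nat.mod_eq_of_lt (carryPrefix_lt hb n)

lemma carryPrefix_eq_carryPrefix_iff (hb : 1 < b) {n m : ℕ} :
    carryPrefix b r n = carryPrefix b r m ↔ n % b ^ carryLength b r m = carryPrefix b r m := by
  constructor
  · intro h
    have hlen := congrArg (carryLength b r) h
    rw [carryLength_carryPrefix hb, carryLength_carryPrefix hb] at hlen
    rw [← hlen]
    exact h
  · intro h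
    rw [carryPrefix, carryLength_eq_of_mod_eq hb h]
    exact h

lemma delta_carryPrefix (hb : 1 < b) (n : ℕ) : delta b r (carryPrefix b r n) = delta b r n :=
  (delta_eq_delta_mod hb (noCarry_carryLength hb n)).symm

lemma card_filter_carryPrefix_eq (hb : 1 < b) (N : ℕ) {s : ℕ} (hs : carryPrefix b r s = s) :
    #{n ∈ range N | carryPrefix b r n = s} = #{n ∈ range N | n % b ^ carryLength b r s = s} := by
  conv_lhs => rw [← hs]
  simp_rw [carryPrefix_eq_carryPrefix_iff hb, hs]

lemma tendsto_card_filter_carryPrefix_div (hb : 1 < b) {s : ℕ} (hs : carryPrefix b r s = s) :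
    Tendsto (fun N : ℕ => (#{n ∈ range N | carryPrefix b r n = s} : ℝ) / N) atTop
      (𝓝 ((b : ℝ) ^ carryLength b r s)⁻¹) := by
  simp only [card_filter_carryPrefix_eq hb _ hs]
  exact_mod_cast tendsto_card_filter_mod_eq_div (hs ▸ carryPrefix_lt hb s)

lemma card_filter_carryPrefix_le (hb : 1 < b) (N : ℕ) {s : ℕ} (hs : carryPrefix b r s = s) :
    (#{n ∈ range N | carryPrefix b r n = s} : ℝ)
      ≤ (1 + b * (r + 1)) * N * ((b : ℝ) ^ carryLength b r s)⁻¹ := by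
  rcases (filter (fun n => carryPrefix b r n = s) (range N)).eq_empty_or_nonempty with h | ⟨n, hn⟩
  · rw [h, card_empty, Nat.cast_zero]
    positivity
  obtain ⟨hnN, hns⟩ := mem_filter.1 hn
  have hN : 1 ≤ N := Nat.one_le_of_lt (mem_range.1 hnN)
  have hpow : b ^ carryLength b r s ≤ b * (N + r) := by
    rw [← hns, carryLength_carryPrefix hb]
    exact (pow_carryLength_le (by omega) n).trans
      (Nat.mul_le_mul_left b (by have := mem_range.1 hnN; omega))
  have hcount := card_filter_mod_eq_mul_le N (hs ▸ carryPrefix_lt (r := r) hb s)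
  have hbound : #{m ∈ range N | m % b ^ carryLength b r s = s} * b ^ carryLength b r s
      ≤ (1 + b * (r + 1)) * N := by
    nlinarith [Nat.mul_le_mul_left (b * r) hN]
  rw [card_filter_carryPrefix_eq hb N hs, le_mul_inv_iff₀ (by positivity)]
  exact_mod_cast hbound

end Carries

section PrefixValues

variable {b r : ℕ}

def prefixValue (b : ℕ) (x : ℕ → Fin b) (k : ℕ) : ℕ := ∑ i ∈ range k, (x i : ℕ) * b ^ i

lemma prefixValue_eq_finFunctionFinEquiv (x : ℕ → Fin b) (k : ℕ) :
    prefixValue b x k = finFunctionFinEquiv (fun i : Fin k => x i) := by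
  rw [finFunctionFinEquiv_apply, prefixValue,
    Fin.sum_univ_eq_sum_range (fun i => (x i : ℕ) * b ^ i)]

lemma prefixValue_lt (x : ℕ → Fin b) (k : ℕ) : prefixValue b x k < b ^ k := by
  rw [prefixValue_eq_finFunctionFinEquiv]
  exact Fin.is_lt _

lemma prefixValue_eq_iff (hb : 0 < b) {x : ℕ → Fin b} {k m : ℕ} (hm : m < b ^ k) :
    prefixValue b x k = m ↔ ∀ i < k, x i = ⟨m / b ^ i % b, Nat.mod_lt _ hb⟩ := by
  rw [prefixValue_eq_finFunctionFinEquiv, show m = ((⟨m, hm⟩ : Fin (b ^ k)) : ℕ) from rfl,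
    Fin.val_inj, ← Equiv.eq_symm_apply, funext_iff, Fin.forall_iff]
  simp [Fin.ext_iff]

lemma prefixValue_mod_pow (x : ℕ → Fin b) {k K : ℕ} (hkK : k ≤ K) :
    prefixValue b x K % b ^ k = prefixValue b x k := by
  obtain ⟨c, hc⟩ : b ^ k ∣ ∑ i ∈ Ico k K, (x i : ℕ) * b ^ i :=
    dvd_sum fun i hi => dvd_mul_of_dvd_right (pow_dvd_pow b (mem_Ico.1 hi).1) _
  have hsplit : prefixValue b x K = prefixValue b x k + b ^ k * c := by
    rw [prefixValue, prefixValue, ← sum_range_add_sum_Ico _ hkK, hc]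
  rw [hsplit, Nat.add_mul_mod_self_left, Nat.mod_eq_of_lt (prefixValue_lt x k)]

lemma measurable_prefixValue (k : ℕ) : Measurable fun x : ℕ → Fin b => prefixValue b x k := by
  unfold prefixValue
  fun_prop

lemma measure_prefixValue_eq (hb : 0 < b) {P : Measure (ℕ → Fin b)}
    (hP : ∀ (k : ℕ) (a : ℕ → Fin b), P {x | ∀ i < k, x i = a i} = (1 / (b : ENNReal)) ^ k)
    {k m : ℕ} (hm : m < b ^ k) :
    P {x | prefixValue b x k = m} = (1 / (b : ENNReal)) ^ k := by
  simp_rw [prefixValue_eq_iff hb hm]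
  exact hP k _

lemma ae_exists_noCarry (hb : 1 < b) {P : Measure (ℕ → Fin b)}
    (hP : ∀ (k : ℕ) (a : ℕ → Fin b), P {x | ∀ i < k, x i = a i} = (1 / (b : ENNReal)) ^ k)
    (r : ℕ) : ∀ᵐ x ∂P, ∃ k, NoCarry b r k (prefixValue b x k) := by
  have hlim : Tendsto (fun K : ℕ => (r : ENNReal) * (1 / (b : ENNReal)) ^ K) atTop (𝓝 0) := by
    have h := ENNReal.Tendsto.const_mul (ENNReal.tendsto_pow_atTop_nhds_zero_of_lt_one
      (r := 1 / (b : ENNReal)) (by rw [one_div, ENNReal.inv_lt_one]; exact_mod_cast hb))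
      (Or.inr (ENNReal.natCast_ne_top r))
    rwa [mul_zero] at h
  rw [ae_iff]
  simp only [not_exists]
  refine le_antisymm (ge_of_tendsto' hlim fun K => ?_) bot_le
  calc P {x | ∀ k, ¬ NoCarry b r k (prefixValue b x k)}
      ≤ P (⋃ m ∈ Ico (b ^ K - r) (b ^ K), {x | prefixValue b x K = m}) := by
        refine measure_mono fun x hx => ?_
        have hcarry := hx K
        simp only [NoCarry, Nat.mod_eq_of_lt (prefixValue_lt x K), not_lt] at hcarry
        simp only [Set.mem_iUnion, mem_Ico]
        exact ⟨_, ⟨by omega, prefixValue_lt x K⟩, rfl⟩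
    _ ≤ ∑ m ∈ Ico (b ^ K - r) (b ^ K), P {x | prefixValue b x K = m} :=
        measure_biUnion_finset_le _ _
    _ = #(Ico (b ^ K - r) (b ^ K)) * (1 / (b : ENNReal)) ^ K := by
        rw [sum_congr rfl fun m hm => measure_prefixValue_eq (by omega) hP (mem_Ico.1 hm).2,
          sum_const, nsmul_eq_mul]
    _ ≤ r * (1 / (b : ENNReal)) ^ K := by
        gcongr
        rw [Nat.card_Ico]
        exact_mod_cast (show b ^ K - (b ^ K - r) ≤ r by omega)

lemma deltaX_eq_delta (hb : 1 < b) {x : ℕ → Fin b} {k : ℕ}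
    (h : NoCarry b r k (prefixValue b x k)) : deltaX b r x = delta b r (prefixValue b x k) := by
  refine Tendsto.limUnder_eq (tendsto_const_nhds.congr' ?_)
  filter_upwards [eventually_ge_atTop k] with j hj
  have hk : NoCarry b r k (prefixValue b x (j + 1)) := by
    rwa [← noCarry_mod_pow_iff le_rfl, prefixValue_mod_pow x (by omega)]
  have hj1 := hk.mono (by omega) (show k ≤ j + 1 by omega)
  rw [NoCarry, Nat.mod_eq_of_lt (prefixValue_lt x _)] at hj1
  rw [deltak, show valk b x j = prefixValue b x (j + 1) from rfl, Nat.mod_eq_of_lt hj1,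
    ← prefixValue_mod_pow x (show k ≤ j + 1 by omega), ← delta_eq_delta_mod hb hk]
  rfl

def carryCylinder (b r s : ℕ) : Set (ℕ → Fin b) :=
  {x | prefixValue b x (carryLength b r s) = s}

lemma measurableSet_carryCylinder (s : ℕ) : MeasurableSet (carryCylinder b r s) :=
  measurable_prefixValue _ (measurableSet_singleton s)

lemma carryPrefix_prefixValue_eq_iff (hb : 1 < b) {x : ℕ → Fin b} {s K : ℕ}
    (hs : carryPrefix b r s = s) (hK : carryLength b r s ≤ K) :
    carryPrefix b r (prefixValue b x K) = s ↔ x ∈ carryCylinder b r s := by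
  conv_lhs => rw [← hs]
  rw [carryPrefix_eq_carryPrefix_iff hb, prefixValue_mod_pow x hK, hs]
  rfl

lemma pairwise_disjoint_carryCylinder (hb : 1 < b) :
    Pairwise (Disjoint on fun s : fixedPoints (carryPrefix b r) => carryCylinder b r s) := by
  intro s t hst
  refine Set.disjoint_left.2 fun x hxs hxt => hst (Subtype.ext ?_)
  rw [← (carryPrefix_prefixValue_eq_iff hb s.2 (le_max_left _ _)).2 hxs,
    ← (carryPrefix_prefixValue_eq_iff hb t.2 (le_max_right _ _)).2 hxt]

lemma mem_carryCylinder_of_noCarry (hb : 1 < b) {x : ℕ → Fin b} {k : ℕ}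
    (h : NoCarry b r k (prefixValue b x k)) :
    x ∈ carryCylinder b r (carryPrefix b r (prefixValue b x k)) := by
  refine (carryPrefix_prefixValue_eq_iff hb (carryPrefix_carryPrefix hb _) ?_).1 rfl
  rw [carryLength_carryPrefix hb]
  exact carryLength_le h

lemma deltaX_eq_of_mem_carryCylinder (hb : 1 < b) {x : ℕ → Fin b} {s : ℕ}
    (hx : x ∈ carryCylinder b r s) : deltaX b r x = delta b r s := by
  have hpre : prefixValue b x (carryLength b r s) = s := hx
  have h : NoCarry b r (carryLength b r s) (prefixValue b x (carryLength b r s)) := by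
    rw [hpre]
    exact noCarry_carryLength hb s
  rw [deltaX_eq_delta hb h, hpre]

lemma measureReal_carryCylinder (hb : 1 < b) {P : Measure (ℕ → Fin b)}
    (hP : ∀ (k : ℕ) (a : ℕ → Fin b), P {x | ∀ i < k, x i = a i} = (1 / (b : ENNReal)) ^ k)
    {s : ℕ} (hs : carryPrefix b r s = s) :
    P.real (carryCylinder b r s) = ((b : ℝ) ^ carryLength b r s)⁻¹ := by
  rw [measureReal_def, carryCylinder,
    measure_prefixValue_eq (by omega) hP (hs ▸ carryPrefix_lt hb s)]
  simp [ENNReal.toReal_pow, ENNReal.toReal_inv]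

lemma hasSum_integral_comp_deltaX {E : Type*} [NormedAddCommGroup E] [NormedSpace ℝ E]
    [CompleteSpace E] (hb : 1 < b) {P : Measure (ℕ → Fin b)}
    (hP : ∀ (k : ℕ) (a : ℕ → Fin b), P {x | ∀ i < k, x i = a i} = (1 / (b : ENNReal)) ^ k)
    {G : ℤ → E} (hG : Integrable (fun x => G (deltaX b r x)) P) :
    HasSum (fun s : fixedPoints (carryPrefix b r) =>
      ((b : ℝ) ^ carryLength b r s)⁻¹ • G (delta b r s)) (∫ x, G (deltaX b r x) ∂P) := by
  have hcover : ∀ᵐ x ∂P, ∃ s : fixedPoints (carryPrefix b r), x ∈ carryCylinder b r s := by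
    filter_upwards [ae_exists_noCarry hb hP r] with x ⟨k, hk⟩
    exact ⟨⟨_, carryPrefix_carryPrefix hb _⟩, mem_carryCylinder_of_noCarry hb hk⟩
  have h := hasSum_integral_of_ae_partition
    (C := fun s : fixedPoints (carryPrefix b r) => carryCylinder b r s)
    (fun s => measurableSet_carryCylinder s)
    (pairwise_disjoint_carryCylinder hb) hcover hG (g := fun s => G (delta b r s))
    fun s x hx => by rw [deltaX_eq_of_mem_carryCylinder hb hx]
  convert h using 3 with s
  exact (measureReal_carryCylinder hb hP s.2).symm

end PrefixValues

theorem average_integrable_general (b : ℕ) (hb : 2 ≤ b)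
    (P : Measure (ℕ → Fin b))
    (hP : ∀ (k : ℕ) (a : ℕ → Fin b),
      P {x | ∀ i < k, x i = a i} = (1 / (b : ENNReal)) ^ k)
    (r : ℕ)
    (f : ℤ → ℂ) (hf : Integrable (fun x => f (deltaX b r x)) P) :
    Tendsto (fun N : ℕ => (N : ℂ)⁻¹ * ∑ n ∈ Finset.range N, f (delta b r n)) atTop
      (𝓝 (∫ x, f (deltaX b r x) ∂P)) := by
  have hint := hasSum_integral_comp_deltaX hb hP hf
  have hnorm := hasSum_integral_comp_deltaX hb hP (G := fun z => ‖f z‖) hf.norm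
  have hlim := tendsto_average_comp_of_density
    (fun n => (⟨carryPrefix b r n, carryPrefix_carryPrefix hb n⟩ : fixedPoints (carryPrefix b r)))
    (fun s => f (delta b r s)) (fun s => ((b : ℝ) ^ carryLength b r s)⁻¹) (1 + b * (r + 1))
    (fun s => by simpa only [Subtype.ext_iff] using tendsto_card_filter_carryPrefix_div hb s.2)
    (fun N s => by simpa only [Subtype.ext_iff] using card_filter_carryPrefix_le hb N s.2)
    (by simpa only [smul_eq_mul] using hnorm.summable)
  rw [hint.tsum_eq] at hlim
  refine hlim.congr fun N => ?_
  simp [Complex.real_smul, delta_carryPrefix hb]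

/-- **Proposition (averages of integrable functions).** Let `r ≥ 1` and `f : ℤ → ℂ` be such
that `f ∘ Δ^(r)` is `ℙ`-integrable on `X`. Then
`lim_N (1/N)·Σ_{n<N} f(Δ^(r)(n)) = ∫ f(Δ^(r)(x)) dℙ(x)`. -/
theorem average_integrable (b : ℕ) (hb : 2 ≤ b)
    (P : Measure (ℕ → Fin b))
    (hP : ∀ (k : ℕ) (a : ℕ → Fin b),
      P {x | ∀ i < k, x i = a i} = (1 / (b : ENNReal)) ^ k)
    (r : ℕ) (hr : 1 ≤ r)
    (f : ℤ → ℂ) (hf : Integrable (fun x => f (deltaX b r x)) P) :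
    Tendsto (fun N : ℕ => (N : ℂ)⁻¹ * ∑ n ∈ Finset.range N, f (delta b r n)) atTop
      (𝓝 (∫ x, f (deltaX b r x) ∂P)) :=
  average_integrable_general b hb P hP r f hf
end
end

section
/- For every r̃ ∈ ℕ and every r₀ ∈ {0,…,b−1}, Var(μ^(b·r̃+r₀)) = ((b−r₀)/b)·Var(μ^(r̃)) + (r₀/b)·Var(μ^(r̃+1)) + r₀·(b−r₀). -/
/-!
Write `n = b * m + j` with `j < b`. Adding `b * r̃ + r₀` to `n` produces no carry out of the
last digit for the `b - r₀` values `j < b - r₀`, and then `Δ^(b r̃ + r₀)(n) = Δ^(r̃)(m) + r₀`; for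
the other `r₀` values it produces one carry, and then `Δ^(b r̃ + r₀)(n) = Δ^(r̃+1)(m) + r₀ - b`.
Hence `μ^(b r̃ + r₀)` is the mixture `((b - r₀)/b) μ^(r̃)(· - r₀) + (r₀/b) μ^(r̃+1)(· - r₀ + b)`.
The total mass and the mean of `μ^(r)` satisfy the same recurrence without the shift terms, so
they are constant in `r`, equal to those of `μ^(0) = δ₀`: `1` and `0`. The second moment of the
mixture is then the claimed formula.
-/

open Filter Topology MeasureTheory

noncomputable section

lemma digitSum_add_mul {b c : ℕ} (hb : 1 < b) (hc : c < b) (m : ℕ) :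
    digitSum b (c + b * m) = c + digitSum b m := by
  rcases eq_or_ne c 0 with rfl | hc0
  · rcases eq_or_ne m 0 with rfl | hm0
    · simp [digitSum]
    · rw [digitSum, Nat.digits_add b hb 0 m hc (Or.inr hm0)]; simp [digitSum]
  · rw [digitSum, Nat.digits_add b hb c m hc (Or.inl hc0)]; simp [digitSum]

lemma delta_mul_add_of_add_lt {b t a m j : ℕ} (hb : 1 < b) (h : j + a < b) :
    delta b (b * t + a) (b * m + j) = delta b t m + a := by
  have hsum : b * m + j + (b * t + a) = (j + a) + b * (m + t) := by ring
  rw [delta, delta, hsum, add_comm (b * m), digitSum_add_mul hb h,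
    digitSum_add_mul hb (by omega), add_comm m]
  push_cast
  ring

lemma delta_mul_add_of_le_add {b t a m j : ℕ} (hb : 1 < b) (hj : j < b) (ha : a < b)
    (h : b ≤ j + a) :
    delta b (b * t + a) (b * m + j) = delta b (t + 1) m + a - b := by
  have hsum : b * m + j + (b * t + a) = (j + a - b) + b * (m + (t + 1)) := by
    rw [Nat.mul_add, Nat.mul_succ]; omega
  rw [delta, delta, hsum, add_comm (b * m), digitSum_add_mul hb (by omega),
    digitSum_add_mul hb hj, add_comm m]
  push_cast [Nat.cast_sub h]
  ring

lemma delta_zero_right (b n : ℕ) : delta b 0 n = 0 := by simp [delta]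

def deltaCount (b r : ℕ) (d : ℤ) (N : ℕ) : ℕ :=
  ((Finset.range N).filter fun n => delta b r n = d).card

lemma sum_range_indicator_delta_mul_add {b t a : ℕ} (hb : 1 < b) (ha : a < b)
    (d : ℤ) (m : ℕ) :
    ∑ j ∈ Finset.range b, (if delta b (b * t + a) (b * m + j) = d then 1 else 0)
      = (b - a) * (if delta b t m = d - a then 1 else 0)
        + a * (if delta b (t + 1) m = d - a + b then 1 else 0) := by
  obtain ⟨c, rfl⟩ : ∃ c, b = c + a := ⟨b - a, by omega⟩
  rw [Finset.sum_range_add, Nat.add_sub_cancel]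
  congr 1
  · rw [Finset.sum_const_nat fun j hj => ?_, Finset.card_range]
    rw [delta_mul_add_of_add_lt hb (by simp at hj; omega)]
    grind
  · rw [Finset.sum_const_nat fun k hk => ?_, Finset.card_range]
    rw [delta_mul_add_of_le_add hb (by simp at hk; omega) ha (by omega)]
    grind

lemma deltaCount_mul_add {b t a : ℕ} (hb : 1 < b) (ha : a < b) (d : ℤ) (M : ℕ) :
    deltaCount b (b * t + a) d (b * M)
      = (b - a) * deltaCount b t (d - a) M + a * deltaCount b (t + 1) (d - a + b) M := by
  induction M with
  | zero => simp [deltaCount]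
  | succ M ih =>
    simp only [deltaCount, Finset.card_filter] at ih ⊢
    rw [Nat.mul_succ, Finset.sum_range_add, ih, sum_range_indicator_delta_mul_add hb ha,
      Finset.sum_range_succ, Finset.sum_range_succ]
    ring

def CarryRecurrence (b : ℕ) (μ : ℕ → ℤ → ℝ) : Prop :=
  ∀ t a, a < b → ∀ d : ℤ,
    μ (b * t + a) d = ((b : ℝ) - a) / b * μ t (d - a) + (a : ℝ) / b * μ (t + 1) (d - a + b)

section Densities

variable {b : ℕ} {μ : ℕ → ℤ → ℝ}
  (hμ : ∀ r d, Tendsto (fun N : ℕ => (deltaCount b r d N : ℝ) / N) atTop (𝓝 (μ r d)))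
include hμ

lemma density_nonneg (r : ℕ) (d : ℤ) : 0 ≤ μ r d :=
  ge_of_tendsto' (hμ r d) fun _ => by positivity

lemma density_zero (d : ℤ) : μ 0 d = if d = 0 then 1 else 0 := by
  refine tendsto_nhds_unique (hμ 0 d) (tendsto_const_nhds.congr' ?_)
  filter_upwards [eventually_ne_atTop 0] with N hN
  split_ifs with hd
  · simp [deltaCount, delta_zero_right, hd, hN]
  · simp [deltaCount, delta_zero_right, Ne.symm hd]

lemma carryRecurrence_of_tendsto (hb : 1 < b) : CarryRecurrence b μ := by
  intro t a ha d
  have hbM : Tendsto (fun M : ℕ => b * M) atTop atTop :=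
    tendsto_id.const_mul_atTop' (by omega)
  refine tendsto_nhds_unique ((hμ _ d).comp hbM) ?_
  convert ((hμ t (d - a)).const_mul (((b : ℝ) - a) / b)).add
    ((hμ (t + 1) (d - a + b)).const_mul ((a : ℝ) / b)) using 1
  funext M
  simp only [Function.comp, deltaCount_mul_add hb ha]
  push_cast [Nat.cast_sub ha.le]
  rcases eq_or_ne M 0 with rfl | hM
  · simp
  · field_simp

end Densities

lemma eq_apply_zero_of_carryRecurrence {b : ℕ} (hb : 2 ≤ b) {f : ℕ → ℝ}
    (hf : ∀ t a, a < b → f (b * t + a) = ((b : ℝ) - a) / b * f t + (a : ℝ) / b * f (t + 1))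
    (r : ℕ) : f r = f 0 := by
  have hb' : (b : ℝ) ≠ 0 := by positivity
  have hb1 : (b : ℝ) - 1 ≠ 0 := by
    have : (2 : ℝ) ≤ b := by exact_mod_cast hb
    linarith
  -- For `r = 1` the recurrence with `(t, a) = (0, 1)` involves `f 1` itself.
  have h1 : f 1 = f 0 := by
    have h := hf 0 1 (by omega)
    simp only [mul_zero, zero_add, Nat.cast_one] at h
    field_simp at h
    have : ((b : ℝ) - 1) * (f 1 - f 0) = 0 := by linarith
    linarith [(mul_eq_zero.mp this).resolve_left hb1]
  induction r using Nat.strong_induction_on with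
  | _ r ih =>
  obtain rfl | rfl | hr : r = 0 ∨ r = 1 ∨ 2 ≤ r := by omega
  · rfl
  · exact h1
  obtain ⟨t, a, ha, rfl⟩ : ∃ t a, a < b ∧ r = b * t + a :=
    ⟨r / b, r % b, Nat.mod_lt r (by omega), (Nat.div_add_mod r b).symm⟩
  have hbt : 2 * t ≤ b * t := Nat.mul_le_mul_right t hb
  rw [hf t a ha, ih t (by omega)]
  rcases eq_or_ne a 0 with rfl | ha0
  · simp [hb']
  · rw [ih (t + 1) (by omega)]
    field_simp
    ring

namespace CarryRecurrence

variable {b : ℕ} {μ : ℕ → ℤ → ℝ}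

lemma hasSum_mul (h : CarryRecurrence b μ) {t a : ℕ} (ha : a < b) (w : ℤ → ℝ) {x y : ℝ}
    (hx : HasSum (fun d => w (d + a) * μ t d) x)
    (hy : HasSum (fun d => w (d + (a - b)) * μ (t + 1) d) y) :
    HasSum (fun d => w d * μ (b * t + a) d) (((b : ℝ) - a) / b * x + (a : ℝ) / b * y) := by
  have hx' : HasSum (fun d => w d * μ t (d - a)) x :=
    (Equiv.addRight (a : ℤ)).hasSum_iff.mp (by simpa [Function.comp_def] using hx)
  have hy' : HasSum (fun d => w d * μ (t + 1) (d - (a - b))) y :=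
    (Equiv.addRight ((a : ℤ) - b)).hasSum_iff.mp (by simpa [Function.comp_def] using hy)
  convert (hx'.mul_left (((b : ℝ) - a) / b)).add (hy'.mul_left ((a : ℝ) / b)) using 1
  · rfl
  funext d
  rw [h t a ha d, ← sub_add]
  ring

lemma hasSum_one (h : CarryRecurrence b μ) (hb : 2 ≤ b) (hs : ∀ r, Summable (μ r))
    (h0 : HasSum (μ 0) 1) (r : ℕ) : HasSum (μ r) 1 := by
  have hf : ∀ t a, a < b → ∑' d, μ (b * t + a) d
      = ((b : ℝ) - a) / b * ∑' d, μ t d + (a : ℝ) / b * ∑' d, μ (t + 1) d := by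
    intro t a ha
    simpa using (h.hasSum_mul ha (fun _ => 1) (by simpa using (hs t).hasSum)
      (by simpa using (hs (t + 1)).hasSum)).tsum_eq
  rw [← h0.tsum_eq, ← eq_apply_zero_of_carryRecurrence (f := fun r => ∑' d, μ r d) hb hf r]
  exact (hs r).hasSum

lemma hasSum_intCast_mul_zero (h : CarryRecurrence b μ) (hb : 2 ≤ b)
    (hs : ∀ r, Summable fun d : ℤ => (d : ℝ) * μ r d) (hone : ∀ r, HasSum (μ r) 1)
    (h0 : HasSum (fun d : ℤ => (d : ℝ) * μ 0 d) 0) (r : ℕ) :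
    HasSum (fun d : ℤ => (d : ℝ) * μ r d) 0 := by
  have hshift : ∀ (t : ℕ) (c : ℤ), HasSum (fun d : ℤ => ((d + c : ℤ) : ℝ) * μ t d)
      (∑' d : ℤ, (d : ℝ) * μ t d + c) := fun t c => by
    simpa [add_mul] using (hs t).hasSum.add ((hone t).mul_left (c : ℝ))
  have hf : ∀ t a, a < b → ∑' d : ℤ, (d : ℝ) * μ (b * t + a) d
      = ((b : ℝ) - a) / b * ∑' d : ℤ, (d : ℝ) * μ t d
        + (a : ℝ) / b * ∑' d : ℤ, (d : ℝ) * μ (t + 1) d := fun t a ha => by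
    rw [(h.hasSum_mul ha (fun d : ℤ => (d : ℝ)) (hshift t a) (hshift (t + 1) _)).tsum_eq]
    have : (b : ℝ) ≠ 0 := by positivity
    field_simp
    push_cast
    ring
  rw [← h0.tsum_eq,
    ← eq_apply_zero_of_carryRecurrence (f := fun r => ∑' d : ℤ, (d : ℝ) * μ r d) hb hf r]
  exact (hs r).hasSum

end CarryRecurrence

lemma summable_pow_mul_of_summable_sq_mul {p : ℤ → ℝ} (hp : ∀ d, 0 ≤ p d)
    (h : Summable fun d : ℤ => (d : ℝ) ^ 2 * p d) {k : ℕ} (hk : k ≤ 2) :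
    Summable fun d : ℤ => (d : ℝ) ^ k * p d := by
  refine Summable.of_norm_bounded_eventually h ?_
  filter_upwards [eventually_cofinite_ne 0] with d hd
  have h1 : (1 : ℝ) ≤ |(d : ℝ)| := by exact_mod_cast Int.one_le_abs hd
  rw [norm_mul, norm_pow, Real.norm_eq_abs, Real.norm_eq_abs, abs_of_nonneg (hp d), ← sq_abs]
  exact mul_le_mul_of_nonneg_right (pow_le_pow_right₀ h1 hk) (hp d)

lemma hasSum_add_sq_mul {p : ℤ → ℝ} {v : ℝ} (h0 : HasSum p 1)
    (h1 : HasSum (fun d : ℤ => (d : ℝ) * p d) 0)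
    (h2 : HasSum (fun d : ℤ => (d : ℝ) ^ 2 * p d) v)
    (c : ℝ) : HasSum (fun d : ℤ => ((d : ℝ) + c) ^ 2 * p d) (v + c ^ 2) := by
  convert h2.add ((h1.mul_left (2 * c)).add (h0.mul_left (c ^ 2))) using 1
  · funext d; ring
  · ring

/-- **Lemma (inductive relation on the variance).** For every `r̃ ∈ ℕ` and every digit
`r₀ ∈ {0,…,b-1}`,
`Var(μ^(b·r̃+r₀)) = ((b-r₀)/b)·Var(μ^(r̃)) + (r₀/b)·Var(μ^(r̃+1)) + r₀·(b-r₀)`. -/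
theorem variance_recurrence (b : ℕ) (hb : 2 ≤ b)
    (μ : ℕ → ℤ → ℝ)
    (hμ : ∀ (r : ℕ) (d : ℤ),
      Tendsto (fun N : ℕ =>
        (((Finset.range N).filter fun n => delta b r n = d).card : ℝ) / N)
        atTop (𝓝 (μ r d)))
    (V : ℕ → ℝ)
    (hV : ∀ r : ℕ, HasSum (fun d : ℤ => (d : ℝ) ^ 2 * μ r d) (V r))
    (rt : ℕ) (r0 : ℕ) (hr0 : r0 < b) :
    V (b * rt + r0) =
      (((b : ℝ) - r0) / b) * V rt + ((r0 : ℝ) / b) * V (rt + 1) +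
        (r0 : ℝ) * ((b : ℝ) - r0) := by
  have hrec : CarryRecurrence b μ := carryRecurrence_of_tendsto hμ (by omega)
  have hsummable (r : ℕ) {k : ℕ} (hk : k ≤ 2) :
      Summable fun d : ℤ => (d : ℝ) ^ k * μ r d :=
    summable_pow_mul_of_summable_sq_mul (density_nonneg hμ r) (hV r).summable hk
  have hμ0 : μ 0 = fun d => if d = 0 then 1 else 0 := funext (density_zero hμ)
  have hone : ∀ r, HasSum (μ r) 1 :=
    hrec.hasSum_one hb (fun r => by simpa using hsummable r (k := 0) (by omega))
      (hμ0 ▸ hasSum_ite_eq 0 1)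
  have hmean0 : HasSum (fun d : ℤ => (d : ℝ) * μ 0 d) 0 := by
    simpa using hasSum_single (f := fun d : ℤ => (d : ℝ) * μ 0 d) 0 fun d hd => by simp [hμ0, hd]
  have hmean : ∀ r, HasSum (fun d : ℤ => (d : ℝ) * μ r d) 0 :=
    hrec.hasSum_intCast_mul_zero hb (fun r => by simpa using hsummable r (k := 1) (by omega)) hone
      hmean0
  have hshift (r : ℕ) (c : ℤ) :
      HasSum (fun d : ℤ => ((d + c : ℤ) : ℝ) ^ 2 * μ r d) (V r + (c : ℝ) ^ 2) := by
    simpa using hasSum_add_sq_mul (hone r) (hmean r) (hV r) c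
  have hb' : (b : ℝ) ≠ 0 := by positivity
  rw [(hV _).unique (hrec.hasSum_mul hr0 (fun d : ℤ => (d : ℝ) ^ 2) (hshift rt r0)
    (hshift (rt + 1) _))]
  field_simp
  push_cast
  ring
end
end
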